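/- arXiv:1807.04474 — 5 statements merged into one kernel-verified Lean document; each statement's English description precedes it below -/
import Mathlib

section
/- Consider a standard Nash equilibrium problem (NEP), i.e. a GNEP in which each constraint function c^ν depends only on the block x^ν, with continuously differentiable θ_ν and c^ν, and let c(x) = (c^1(x^1),…,c^N(x^N)) be the concatenated constraint map ℝ^n → ℝ^r. If x̄ ∈ ℝ^n is feasible (c^ν(x̄^ν) ≤ 0 for all ν), then GNEP-CPLD holds at x̄ if and only if the concatenated map c satisfies the classical CPLD condition at x̄. -/
open Filter Topology Finset Function RealInnerProductSpace

/-- The strategy space of a GNEP: one Euclidean block per player. -/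
abbrev Strat {N : ℕ} (n : Fin N → ℕ) := (ν : Fin N) → EuclideanSpace ℝ (Fin (n ν))

/-- Partial gradient of `f : Strat n → ℝ` with respect to player `ν`'s block at `x`. -/
noncomputable def pgrad {N : ℕ} {n : Fin N → ℕ} (ν : Fin N)
    (f : Strat n → ℝ) (x : Strat n) : EuclideanSpace ℝ (Fin (n ν)) :=
  gradient (fun z => f (Function.update x ν z)) (x ν)

/-- Positive linear dependence of a family on a finite index set. -/
def PosLinDep {ι E : Type*} [AddCommGroup E] [Module ℝ E]
    (s : Finset ι) (v : ι → E) : Prop :=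
  ∃ a : ι → ℝ, (∀ i, 0 ≤ a i) ∧ (∃ i ∈ s, a i ≠ 0) ∧ ∑ i ∈ s, a i • v i = 0

/-- Linear dependence of a family on a finite index set. -/
def LinDep {ι E : Type*} [AddCommGroup E] [Module ℝ E]
    (s : Finset ι) (v : ι → E) : Prop :=
  ∃ a : ι → ℝ, (∃ i ∈ s, a i ≠ 0) ∧ ∑ i ∈ s, a i • v i = 0

/-- CPLD with respect to player `ν`. -/
def CPLDnu {N : ℕ} {n : Fin N → ℕ} {ι : Type*} (ν : Fin N)
    (c : ι → Strat n → ℝ) (x : Strat n) : Prop :=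
  ∀ I : Finset ι, (∀ i ∈ I, c i x = 0) →
    PosLinDep I (fun i => pgrad ν (c i) x) →
    ∃ U ∈ 𝓝 x, ∀ y ∈ U, LinDep I (fun i => pgrad ν (c i) y)

/-- EMFCQ with respect to player `ν`. -/
def EMFCQnu {N : ℕ} {n : Fin N → ℕ} {ι : Type*} (ν : Fin N)
    (c : ι → Strat n → ℝ) (x : Strat n) : Prop :=
  ∃ d : EuclideanSpace ℝ (Fin (n ν)), ∀ i, 0 ≤ c i x → inner (𝕜 := ℝ) (pgrad ν (c i) x) d < 0

/-! Since `c ν` depends only on the block `x ν`, the full gradient of `c ν i` is its partial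
gradient in block `ν`, placed by `Pi.single ν`. A linear combination of such block vectors
vanishes iff it vanishes blockwise, so a family indexed by `I ⊆ Σ ν, Fin (r ν)` is (positively)
linearly dependent iff the family of partial gradients over some fibre `{i | ⟨ν, i⟩ ∈ I}` is;
and a single player's index set is the fibre of its image in the sigma type. The two CPLD
conditions therefore translate into each other fibre by fibre. -/

namespace Finset

variable {ι : Type*} {κ : ι → Type*}

noncomputable def sigmaFiber (I : Finset (Σ i, κ i)) (i : ι) : Finset (κ i) :=
  I.preimage (Sigma.mk i) sigma_mk_injective.injOn

@[simp]
lemma mem_sigmaFiber {I : Finset (Σ i, κ i)} {i : ι} {k : κ i} :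
    k ∈ I.sigmaFiber i ↔ ⟨i, k⟩ ∈ I :=
  mem_preimage

@[simp]
lemma sigmaFiber_map_sigmaMk (i : ι) (s : Finset (κ i)) :
    (s.map (Embedding.sigmaMk i)).sigmaFiber i = s := by
  ext; simp

end Finset

section SigmaSingle

variable {ι : Type*} [DecidableEq ι] {κ : ι → Type*} {E : ι → Type*}
  [∀ i, AddCommGroup (E i)] [∀ i, Module ℝ (E i)]
  {I : Finset (Σ i, κ i)} {w : ∀ i, κ i → E i}

lemma sum_smul_sigma_single_apply (a : (Σ i, κ i) → ℝ) (i : ι) :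
    (∑ j ∈ I, a j • Pi.single j.1 (w j.1 j.2)) i = ∑ k ∈ I.sigmaFiber i, a ⟨i, k⟩ • w i k := by
  rw [Finset.sum_apply, Finset.sigmaFiber,
    ← Finset.sum_preimage (Sigma.mk i) I sigma_mk_injective.injOn]
  · simp
  · rintro ⟨i', k⟩ - hk
    have hi : i ≠ i' := by rintro rfl; exact hk ⟨k, rfl⟩
    simp [Pi.single_eq_of_ne hi]

lemma sum_extend_smul_sigma_single (i : ι) (a : κ i → ℝ) :
    ∑ j ∈ I, extend (Sigma.mk i) a 0 j • Pi.single j.1 (w j.1 j.2) =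
      Pi.single i (∑ k ∈ I.sigmaFiber i, a k • w i k) := by
  ext i'
  rw [sum_smul_sigma_single_apply]
  rcases eq_or_ne i' i with rfl | hi
  · simp [sigma_mk_injective.extend_apply]
  · rw [Pi.single_eq_of_ne hi]
    refine Finset.sum_eq_zero fun k _ => ?_
    rw [extend_apply' _ _ _ fun ⟨_, hk⟩ => hi (congrArg Sigma.fst hk).symm, Pi.zero_apply,
      zero_smul]

lemma PosLinDep.exists_sigmaFiber (h : PosLinDep I fun j => Pi.single j.1 (w j.1 j.2)) :
    ∃ j ∈ I, PosLinDep (I.sigmaFiber j.1) (w j.1) := by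
  obtain ⟨a, ha, ⟨⟨i, k⟩, hk, hak⟩, hsum⟩ := h
  refine ⟨⟨i, k⟩, hk, fun l => a ⟨i, l⟩, fun _ => ha _, ⟨k, by simpa using hk, hak⟩, ?_⟩
  rw [← sum_smul_sigma_single_apply, hsum, Pi.zero_apply]

lemma PosLinDep.of_sigmaFiber {i : ι} (h : PosLinDep (I.sigmaFiber i) (w i)) :
    PosLinDep I fun j => Pi.single j.1 (w j.1 j.2) := by
  obtain ⟨a, ha, ⟨k, hk, hak⟩, hsum⟩ := h
  refine ⟨extend (Sigma.mk i) a 0, fun j => ?_,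
    ⟨⟨i, k⟩, by simpa using hk, by rwa [sigma_mk_injective.extend_apply]⟩, ?_⟩
  · unfold extend; split_ifs <;> simp [ha]
  · rw [sum_extend_smul_sigma_single, hsum, Pi.single_zero]

lemma LinDep.exists_sigmaFiber (h : LinDep I fun j => Pi.single j.1 (w j.1 j.2)) :
    ∃ j ∈ I, LinDep (I.sigmaFiber j.1) (w j.1) := by
  obtain ⟨a, ⟨⟨i, k⟩, hk, hak⟩, hsum⟩ := h
  refine ⟨⟨i, k⟩, hk, fun l => a ⟨i, l⟩, ⟨k, by simpa using hk, hak⟩, ?_⟩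
  rw [← sum_smul_sigma_single_apply, hsum, Pi.zero_apply]

lemma LinDep.of_sigmaFiber {i : ι} (h : LinDep (I.sigmaFiber i) (w i)) :
    LinDep I fun j => Pi.single j.1 (w j.1 j.2) := by
  obtain ⟨a, ⟨k, hk, hak⟩, hsum⟩ := h
  refine ⟨extend (Sigma.mk i) a 0,
    ⟨⟨i, k⟩, by simpa using hk, by rwa [sigma_mk_injective.extend_apply]⟩, ?_⟩
  rw [sum_extend_smul_sigma_single, hsum, Pi.single_zero]

end SigmaSingle

section BlockGradient

variable {N : ℕ} {n : Fin N → ℕ} {f : Strat n → ℝ} {ν : Fin N}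

lemma pgrad_eq_zero_of_ne (hf : ∀ x y : Strat n, x ν = y ν → f x = f y) {μ : Fin N}
    (hμ : μ ≠ ν) (x : Strat n) : pgrad μ f x = 0 := by
  have : (fun z => f (update x μ z)) = fun _ => f x :=
    funext fun z => hf _ _ (update_of_ne hμ.symm z x)
  rw [pgrad, this, gradient_fun_const]

lemma fun_pgrad_eq_single (hf : ∀ x y : Strat n, x ν = y ν → f x = f y) (x : Strat n) :
    (fun μ => pgrad μ f x : Strat n) = Pi.single ν (pgrad ν f x) := by
  funext μ
  rcases eq_or_ne μ ν with rfl | hμ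
  · rw [Pi.single_eq_same]
  · rw [Pi.single_eq_of_ne hμ, pgrad_eq_zero_of_ne hf hμ]

end BlockGradient

theorem stmt0_general {N : ℕ} {n r : Fin N → ℕ}
    (c : (ν : Fin N) → Fin (r ν) → Strat n → ℝ)
    (hNEP : ∀ ν i (x y : Strat n), x ν = y ν → c ν i x = c ν i y)
    (xbar : Strat n) :
    (∀ ν, CPLDnu ν (c ν) xbar) ↔
      (∀ I : Finset ((ν : Fin N) × Fin (r ν)),
        (∀ j ∈ I, c j.1 j.2 xbar = 0) →
        PosLinDep I (fun j => (fun μ => pgrad μ (c j.1 j.2) xbar : Strat n)) →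
        ∃ U ∈ 𝓝 xbar, ∀ y ∈ U,
          LinDep I (fun j => (fun μ => pgrad μ (c j.1 j.2) y : Strat n))) := by
  set g : Strat n → ∀ ν, Fin (r ν) → EuclideanSpace ℝ (Fin (n ν)) :=
    fun y ν k => pgrad ν (c ν k) y
  have hgrad (y : Strat n) :
      (fun j : (ν : Fin N) × Fin (r ν) => (fun μ => pgrad μ (c j.1 j.2) y : Strat n)) =
        fun j => Pi.single j.1 (g y j.1 j.2) :=
    funext fun j => fun_pgrad_eq_single (hNEP j.1 j.2) y
  simp only [hgrad]
  constructor
  · intro hcpld I hact hpos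
    obtain ⟨⟨ν, k⟩, hk, hposν⟩ := PosLinDep.exists_sigmaFiber (w := g xbar) hpos
    obtain ⟨U, hU, hlin⟩ :=
      hcpld ν (I.sigmaFiber ν) (fun k hk => hact _ (Finset.mem_sigmaFiber.1 hk)) hposν
    exact ⟨U, hU, fun y hy => LinDep.of_sigmaFiber (w := g y) (hlin y hy)⟩
  · intro hcl ν I hact hpos
    let Î : Finset ((ν : Fin N) × Fin (r ν)) := I.map (Embedding.sigmaMk ν)
    have hfiber : Î.sigmaFiber ν = I :=
      Finset.sigmaFiber_map_sigmaMk (κ := fun μ => Fin (r μ)) ν I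
    obtain ⟨U, hU, hlin⟩ := hcl Î (by simpa [Î] using hact)
      (PosLinDep.of_sigmaFiber (w := g xbar) (hfiber ▸ hpos))
    refine ⟨U, hU, fun y hy => ?_⟩
    obtain ⟨j, hj, hlinj⟩ := LinDep.exists_sigmaFiber (w := g y) (hlin y hy)
    obtain ⟨k, -, rfl⟩ := Finset.mem_map.1 hj
    exact hfiber ▸ hlinj

/-- For a standard NEP (each `c ν` depends only on the block `x ν`),
at a feasible point, GNEP-CPLD holds iff the concatenated constraint map satisfies
the classical CPLD condition. -/
theorem stmt0 {N : ℕ} {n r : Fin N → ℕ}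
    (θ : Fin N → Strat n → ℝ)
    (c : (ν : Fin N) → Fin (r ν) → Strat n → ℝ)
    (hθ : ∀ ν, ContDiff ℝ 1 (θ ν))
    (hc : ∀ ν i, ContDiff ℝ 1 (c ν i))
    (hNEP : ∀ ν i (x y : Strat n), x ν = y ν → c ν i x = c ν i y)
    (xbar : Strat n)
    (hfeas : ∀ ν i, c ν i xbar ≤ 0) :
    (∀ ν, CPLDnu ν (c ν) xbar) ↔
      (∀ I : Finset ((ν : Fin N) × Fin (r ν)),
        (∀ j ∈ I, c j.1 j.2 xbar = 0) →
        PosLinDep I (fun j => (fun μ => pgrad μ (c j.1 j.2) xbar : Strat n)) →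
        ∃ U ∈ 𝓝 xbar, ∀ y ∈ U,
          LinDep I (fun j => (fun μ => pgrad μ (c j.1 j.2) y : Strat n))) :=
  stmt0_general c hNEP xbar
end

section
/- Consider a GNEP with continuously differentiable θ_ν and c^ν. Let (x^k) ⊂ ℝ^n be a sequence converging to x̄ and, for each player ν, let (λ^{ν,k}) ⊂ ℝ^{r_ν} be vectors such that ∇_{x^ν}θ_ν(x^k) + ∇_{x^ν}c^ν(x^k) λ^{ν,k} → 0 and min{−c^ν(x^k), λ^{ν,k}} → 0 as k → ∞. If GNEP-CPLD holds at x̄, then there exists a multiplier λ̄ = (λ̄^1,…,λ̄^N) such that (x̄, λ̄) is a KKT point of the GNEP. -/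
open Filter Topology Finset Function RealInnerProductSpace

/-- KKT point of the GNEP with objectives `θ` and constraints `c`. -/
def KKTPoint {N : ℕ} {n : Fin N → ℕ} {r : Fin N → ℕ}
    (θ : Fin N → Strat n → ℝ) (c : (ν : Fin N) → Fin (r ν) → Strat n → ℝ)
    (x : Strat n) (lam : (ν : Fin N) → Fin (r ν) → ℝ) : Prop :=
  ∀ ν, (pgrad ν (θ ν) x + ∑ i, lam ν i • pgrad ν (c ν i) x = 0) ∧
    (∀ i, min (-(c ν i x)) (lam ν i) = 0)

/-!
Fix a player `ν`. Perturbing the approximate multipliers by vanishing amounts, they may be taken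
nonnegative and supported on the constraints active at `x̄`. By the conic Carathéodory lemma each
residual `∇θ(xᵏ) + ∑ μᵏᵢ ∇cᵢ(xᵏ)` can be rewritten using only a linearly independent subfamily of
the gradients `∇cᵢ(xᵏ)`, and along a subsequence this subfamily is a fixed index set `I`.
Normalizing `(1, μᵏ)` into the standard simplex and passing to a limit gives a Fritz John relation
`τ ∇θ(x̄) + ∑ γᵢ ∇cᵢ(x̄) = 0`. If `τ = 0`, the gradients `∇cᵢ(x̄)`, `i ∈ I`, are positively linearly
dependent, so by CPLD they stay linearly dependent at `xᵏ` for large `k`, a contradiction;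
hence `γ / τ` is a KKT multiplier.
-/

theorem pgrad_eq_toDual_symm {N : ℕ} {n : Fin N → ℕ} (ν : Fin N) {f : Strat n → ℝ}
    {x : Strat n} (hf : DifferentiableAt ℝ f x) :
    pgrad ν f x = (InnerProductSpace.toDual ℝ _).symm
      ((fderiv ℝ f x).comp (.pi (Pi.single ν (.id ℝ _)))) := by
  have hf' : HasFDerivAt f (fderiv ℝ f x) (Function.update x ν (x ν)) := by
    rw [update_eq_self]; exact hf.hasFDerivAt
  exact congrArg _ (hf'.comp (x ν) (hasFDerivAt_update x (x ν))).fderiv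

theorem continuous_pgrad {N : ℕ} {n : Fin N → ℕ} (ν : Fin N) {f : Strat n → ℝ}
    (hf : ContDiff ℝ 1 f) : Continuous (pgrad ν f) := by
  rw [continuous_congr fun x => pgrad_eq_toDual_symm ν (hf.differentiable one_ne_zero x)]
  exact (InnerProductSpace.toDual ℝ _).symm.continuous.comp
    ((hf.continuous_fderiv one_ne_zero).clm_comp continuous_const)

section Caratheodory

variable {ι E : Type*} [AddCommGroup E] [Module ℝ E] {s : Finset ι} {v : ι → E}

theorem LinDep.exists_pos (h : LinDep s v) :
    ∃ a : ι → ℝ, (∃ i ∈ s, 0 < a i) ∧ ∑ i ∈ s, a i • v i = 0 := by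
  obtain ⟨a, ⟨i, hi, hai⟩, ha⟩ := h
  rcases hai.lt_or_gt with hai | hai
  · exact ⟨-a, ⟨i, hi, neg_pos.2 hai⟩, by simp [neg_smul, ha]⟩
  · exact ⟨a, ⟨i, hi, hai⟩, ha⟩

/-- One step of the conic Carathéodory reduction: move along a dependence relation until the
first coefficient vanishes. -/
theorem LinDep.exists_sum_erase_smul_eq [DecidableEq ι] (hdep : LinDep s v) {a : ι → ℝ}
    (ha : ∀ i ∈ s, 0 ≤ a i) :
    ∃ j ∈ s, ∃ b : ι → ℝ, (∀ i ∈ s, 0 ≤ b i) ∧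
      ∑ i ∈ s.erase j, b i • v i = ∑ i ∈ s, a i • v i := by
  obtain ⟨c, ⟨i₁, hi₁, hc₁⟩, hc⟩ := hdep.exists_pos
  obtain ⟨j, hj, hmin⟩ := (s.filter (0 < c ·)).exists_min_image (fun i => a i / c i)
    ⟨i₁, mem_filter.2 ⟨hi₁, hc₁⟩⟩
  obtain ⟨hjs, hcj⟩ := mem_filter.1 hj
  set T := a j / c j
  have hT : 0 ≤ T := div_nonneg (ha j hjs) hcj.le
  refine ⟨j, hjs, fun i => a i - T * c i, fun i hi => ?_, ?_⟩
  · rcases lt_or_ge 0 (c i) with hci | hci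
    · have := (le_div_iff₀ hci).1 (hmin i (mem_filter.2 ⟨hi, hci⟩))
      linarith
    · nlinarith [ha i hi]
  · rw [sum_erase _ (by simp [T, div_mul_cancel₀ _ hcj.ne'])]
    simp only [sub_smul, sum_sub_distrib, mul_smul, ← smul_sum, hc, smul_zero, sub_zero]

theorem exists_subset_not_linDep_sum_smul_eq (v : ι → E) (s : Finset ι) {a : ι → ℝ}
    (ha : ∀ i ∈ s, 0 ≤ a i) :
    ∃ t ⊆ s, ∃ b : ι → ℝ, (∀ i ∈ t, 0 ≤ b i) ∧ ¬ LinDep t v ∧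
      ∑ i ∈ t, b i • v i = ∑ i ∈ s, a i • v i := by
  classical
  induction s using Finset.strongInduction generalizing a with
  | H s ih =>
    by_cases hdep : LinDep s v
    · obtain ⟨j, hj, b, hb, hsum⟩ := hdep.exists_sum_erase_smul_eq ha
      obtain ⟨t, hts, b', hb', hind, hsum'⟩ :=
        ih _ (erase_ssubset hj) fun i hi => hb i (mem_of_mem_erase hi)
      exact ⟨t, hts.trans (erase_subset _ _), b', hb', hind, hsum'.trans hsum⟩
    · exact ⟨s, subset_rfl, a, ha, hdep, rfl⟩

end Caratheodory

section Complementarity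

variable {a b : ℕ → ℝ} {a₀ : ℝ}

theorem nonneg_of_tendsto_min (ha : Tendsto a atTop (𝓝 a₀))
    (hmin : Tendsto (fun k => min (a k) (b k)) atTop (𝓝 0)) : 0 ≤ a₀ :=
  le_of_tendsto_of_tendsto' hmin ha fun _ => min_le_left _ _

theorem tendsto_min_zero_of_tendsto_min (hmin : Tendsto (fun k => min (a k) (b k)) atTop (𝓝 0)) :
    Tendsto (fun k => min (b k) 0) atTop (𝓝 0) := by
  have hlow : Tendsto (fun k => min (min (a k) (b k)) 0) atTop (𝓝 0) := by
    simpa using hmin.min (tendsto_const_nhds (x := (0 : ℝ)))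
  exact tendsto_of_tendsto_of_tendsto_of_le_of_le hlow tendsto_const_nhds
    (fun k => min_le_min_right _ (min_le_right _ _)) fun k => min_le_right _ _

theorem tendsto_zero_of_tendsto_min_of_pos (ha : Tendsto a atTop (𝓝 a₀))
    (hmin : Tendsto (fun k => min (a k) (b k)) atTop (𝓝 0)) (ha₀ : 0 < a₀) :
    Tendsto b atTop (𝓝 0) := by
  refine hmin.congr' ?_
  filter_upwards [ha.eventually (lt_mem_nhds (half_lt_self ha₀)),
    hmin.eventually (gt_mem_nhds (half_pos ha₀))] with k hak hmink
  exact min_eq_right (le_of_not_ge fun hab => by rw [min_eq_left hab] at hmink; linarith)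

end Complementarity

section Limits

variable {E : Type*} [NormedAddCommGroup E] [NormedSpace ℝ E] {ι : Type*} [Fintype ι]
  {g : ℕ → E} {g₀ : E} {v : ℕ → ι → E} {v₀ : ι → E}

theorem tendsto_add_sum_smul_of_tendsto_sub (hv : ∀ i, Tendsto (fun k => v k i) atTop (𝓝 (v₀ i)))
    {l μ : ℕ → ι → ℝ} (hdiff : ∀ i, Tendsto (fun k => μ k i - l k i) atTop (𝓝 0))
    (hres : Tendsto (fun k => g k + ∑ i, l k i • v k i) atTop (𝓝 0)) :
    Tendsto (fun k => g k + ∑ i, μ k i • v k i) atTop (𝓝 0) := by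
  have hcorr : Tendsto (fun k => ∑ i, (μ k i - l k i) • v k i) atTop (𝓝 0) := by
    simpa using tendsto_finsetSum univ fun i _ => (hdiff i).smul (hv i)
  convert (hres.add hcorr) using 2 with k
  · simp only [sub_smul, sum_sub_distrib]; abel
  · rw [add_zero]

theorem tendsto_add_sum_active_smul {c : ℕ → ι → ℝ} {c₀ : ι → ℝ}
    (hv : ∀ i, Tendsto (fun k => v k i) atTop (𝓝 (v₀ i)))
    (hc : ∀ i, Tendsto (fun k => c k i) atTop (𝓝 (c₀ i))) {l : ℕ → ι → ℝ}
    (hmin : ∀ i, Tendsto (fun k => min (-c k i) (l k i)) atTop (𝓝 0))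
    (hres : Tendsto (fun k => g k + ∑ i, l k i • v k i) atTop (𝓝 0)) :
    Tendsto (fun k => g k + ∑ i ∈ univ.filter (c₀ · = 0), max (l k i) 0 • v k i)
      atTop (𝓝 0) := by
  have hdiff : ∀ i, Tendsto (fun k => (if c₀ i = 0 then max (l k i) 0 else 0) - l k i)
      atTop (𝓝 0) := by
    intro i
    split_ifs with hci
    · have hneg := (tendsto_min_zero_of_tendsto_min (hmin i)).neg
      simp only [neg_zero] at hneg
      refine hneg.congr fun k => ?_
      linarith [min_add_max (l k i) 0]
    · have hpos : 0 < -c₀ i := lt_of_le_of_ne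
        (nonneg_of_tendsto_min (hc i).neg (hmin i)) (neg_ne_zero.2 hci).symm
      simpa using (tendsto_zero_of_tendsto_min_of_pos (hc i).neg (hmin i) hpos).neg
  simpa only [sum_filter, ite_smul, zero_smul] using
    tendsto_add_sum_smul_of_tendsto_sub hv hdiff hres

theorem exists_fritzJohn_of_tendsto (hg : Tendsto g atTop (𝓝 g₀))
    (hv : ∀ i, Tendsto (fun k => v k i) atTop (𝓝 (v₀ i))) {I : Finset ι} {μ : ℕ → ι → ℝ}
    (hμ : ∀ k, ∀ i ∈ I, 0 ≤ μ k i)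
    (hres : Tendsto (fun k => g k + ∑ i ∈ I, μ k i • v k i) atTop (𝓝 0)) :
    ∃ τ : ℝ, ∃ γ : ι → ℝ, 0 ≤ τ ∧ (∀ i, 0 ≤ γ i) ∧ (∀ i ∉ I, γ i = 0) ∧
      τ + ∑ i ∈ I, γ i = 1 ∧ τ • g₀ + ∑ i ∈ I, γ i • v₀ i = 0 := by
  classical
  have hS : ∀ k, 0 < 1 + ∑ i ∈ I, μ k i := fun k => by linarith [sum_nonneg (hμ k)]
  -- the coordinate `none` carries the weight of the objective
  set p : ℕ → Option ι → ℝ := fun k o =>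
    (1 + ∑ i ∈ I, μ k i)⁻¹ * o.elim 1 fun i => if i ∈ I then μ k i else 0
  have hp : ∀ k, p k ∈ stdSimplex ℝ (Option ι) := by
    refine fun k => ⟨fun o => mul_nonneg (inv_nonneg.2 (hS k).le) ?_, ?_⟩
    · rcases o with _ | i
      · exact zero_le_one
      · by_cases hi : i ∈ I <;> simp [hi, hμ k i]
    · rw [Fintype.sum_option]
      simp only [p, Option.elim, ← mul_sum, sum_ite_mem, univ_inter, ← mul_add]
      exact inv_mul_cancel₀ (hS k).ne'
  obtain ⟨q, ⟨hq0, hq1⟩, φ, hφ, hq⟩ := (isCompact_stdSimplex ℝ (Option ι)).tendsto_subseq hp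
  have hcoord : ∀ o, Tendsto (fun k => p (φ k) o) atTop (𝓝 (q o)) := tendsto_pi_nhds.1 hq
  have hqI : ∀ i ∉ I, q (some i) = 0 := fun i hi =>
    tendsto_nhds_unique (hcoord (some i)) (by simp [p, hi])
  refine ⟨q none, fun i => q (some i), hq0 _, fun i => hq0 _, hqI, ?_, ?_⟩
  · rwa [Fintype.sum_option, ← sum_subset (subset_univ I) fun i _ hi => hqI i hi] at hq1
  · have hscaled : ∀ k, p k none • (g k + ∑ i ∈ I, μ k i • v k i) =
        p k none • g k + ∑ i ∈ I, p k (some i) • v k i := fun k => by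
      simp +contextual [p, smul_add, smul_sum, smul_smul]
    have hlim := ((hcoord none).smul (hg.comp hφ.tendsto_atTop)).add
      (tendsto_finsetSum I fun i _ => (hcoord (some i)).smul ((hv i).comp hφ.tendsto_atTop))
    refine tendsto_nhds_unique hlim ?_
    simpa [hscaled] using (hcoord none).smul (hres.comp hφ.tendsto_atTop)

theorem exists_nonneg_of_tendsto_of_not_posLinDep (hg : Tendsto g atTop (𝓝 g₀))
    (hv : ∀ i, Tendsto (fun k => v k i) atTop (𝓝 (v₀ i))) {I : Finset ι} {μ : ℕ → ι → ℝ}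
    (hμ : ∀ k, ∀ i ∈ I, 0 ≤ μ k i)
    (hres : Tendsto (fun k => g k + ∑ i ∈ I, μ k i • v k i) atTop (𝓝 0))
    (hI : ¬ PosLinDep I v₀) :
    ∃ μ₀ : ι → ℝ, (∀ i, 0 ≤ μ₀ i) ∧ (∀ i ∉ I, μ₀ i = 0) ∧ g₀ + ∑ i ∈ I, μ₀ i • v₀ i = 0 := by
  obtain ⟨τ, γ, hτ, hγ, hγI, hsum, hFJ⟩ := exists_fritzJohn_of_tendsto hg hv hμ hres
  rcases hτ.eq_or_lt with rfl | hτ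
  · rw [zero_add] at hsum
    exact absurd ⟨γ, hγ, exists_ne_zero_of_sum_ne_zero (by rw [hsum]; exact one_ne_zero),
      by simpa using hFJ⟩ hI
  · refine ⟨τ⁻¹ • γ, fun i => mul_nonneg (inv_nonneg.2 hτ.le) (hγ i),
      fun i hi => by simp [hγI i hi], ?_⟩
    calc g₀ + ∑ i ∈ I, (τ⁻¹ • γ) i • v₀ i = τ⁻¹ • (τ • g₀ + ∑ i ∈ I, γ i • v₀ i) := by
          simp [smul_add, smul_sum, smul_smul, hτ.ne']
      _ = 0 := by rw [hFJ, smul_zero]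

theorem exists_nonneg_of_tendsto_of_cpld (hg : Tendsto g atTop (𝓝 g₀))
    (hv : ∀ i, Tendsto (fun k => v k i) atTop (𝓝 (v₀ i))) {s : Finset ι} {μ : ℕ → ι → ℝ}
    (hμ : ∀ k, ∀ i ∈ s, 0 ≤ μ k i)
    (hres : Tendsto (fun k => g k + ∑ i ∈ s, μ k i • v k i) atTop (𝓝 0))
    (hcpld : ∀ I ⊆ s, PosLinDep I v₀ → ∀ᶠ k in atTop, LinDep I (v k)) :
    ∃ μ₀ : ι → ℝ, (∀ i, 0 ≤ μ₀ i) ∧ (∀ i ∉ s, μ₀ i = 0) ∧ g₀ + ∑ i ∈ s, μ₀ i • v₀ i = 0 := by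
  choose t hts b hb hind hsum using fun k => exists_subset_not_linDep_sum_smul_eq (v k) s (hμ k)
  obtain ⟨I, hI⟩ : ∃ I, ∃ᶠ k in atTop, t k = I := by
    obtain ⟨I, hI⟩ := Finite.exists_infinite_fiber t
    exact ⟨I, Nat.frequently_atTop_iff_infinite.2 (Set.infinite_coe_iff.1 hI)⟩
  obtain ⟨φ, hφ, htφ⟩ := extraction_of_frequently_atTop hI
  have hIs : I ⊆ s := htφ 0 ▸ hts (φ 0)
  have hpos : ¬ PosLinDep I v₀ := fun h =>
    let ⟨k, hk⟩ := (hφ.tendsto_atTop.eventually (hcpld I hIs h)).exists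
    hind (φ k) (htφ k ▸ hk)
  have hresI : Tendsto (fun k => g (φ k) + ∑ i ∈ I, b (φ k) i • v (φ k) i) atTop (𝓝 0) :=
    (hres.comp hφ.tendsto_atTop).congr fun k => by simp [← hsum, htφ]
  obtain ⟨μ₀, hμ₀, hμ₀I, hKKT⟩ := exists_nonneg_of_tendsto_of_not_posLinDep
    (hg.comp hφ.tendsto_atTop) (fun i => (hv i).comp hφ.tendsto_atTop)
    (fun k i hi => hb (φ k) i (htφ k ▸ hi)) hresI hpos
  refine ⟨μ₀, hμ₀, fun i hi => hμ₀I i fun h => hi (hIs h), ?_⟩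
  rwa [← sum_subset hIs fun i _ hi => by rw [hμ₀I i hi, zero_smul]]

end Limits

theorem exists_kkt_multiplier_of_cpldNu {N : ℕ} {n : Fin N → ℕ} {ι : Type*} [Fintype ι]
    (ν : Fin N) {θ : Strat n → ℝ} {c : ι → Strat n → ℝ} (hθ : ContDiff ℝ 1 θ)
    (hc : ∀ i, ContDiff ℝ 1 (c i)) {x : ℕ → Strat n} {x₀ : Strat n}
    (hx : Tendsto x atTop (𝓝 x₀)) {l : ℕ → ι → ℝ}
    (hres : Tendsto (fun k => pgrad ν θ (x k) + ∑ i, l k i • pgrad ν (c i) (x k)) atTop (𝓝 0))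
    (hmin : ∀ i, Tendsto (fun k => min (-c i (x k)) (l k i)) atTop (𝓝 0))
    (hcpld : CPLDnu ν c x₀) :
    ∃ l₀ : ι → ℝ, (pgrad ν θ x₀ + ∑ i, l₀ i • pgrad ν (c i) x₀ = 0) ∧
      ∀ i, min (-c i x₀) (l₀ i) = 0 := by
  have hv : ∀ i, Tendsto (fun k => pgrad ν (c i) (x k)) atTop (𝓝 (pgrad ν (c i) x₀)) :=
    fun i => ((continuous_pgrad ν (hc i)).tendsto x₀).comp hx
  have hcx : ∀ i, Tendsto (fun k => c i (x k)) atTop (𝓝 (c i x₀)) :=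
    fun i => ((hc i).continuous.tendsto x₀).comp hx
  set A := univ.filter fun i => c i x₀ = 0
  have hcpldA : ∀ I ⊆ A, PosLinDep I (fun i => pgrad ν (c i) x₀) →
      ∀ᶠ k in atTop, LinDep I fun i => pgrad ν (c i) (x k) := fun I hIA hpos =>
    let ⟨U, hU, hdep⟩ := hcpld I (fun i hi => (mem_filter.1 (hIA hi)).2) hpos
    (hx.eventually_mem hU).mono fun k hk => hdep _ hk
  obtain ⟨l₀, hl₀, hl₀A, hKKT⟩ := exists_nonneg_of_tendsto_of_cpld
    (((continuous_pgrad ν hθ).tendsto x₀).comp hx) hv (fun k i _ => le_max_right _ _)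
    (tendsto_add_sum_active_smul hv hcx hmin hres) hcpldA
  refine ⟨l₀, ?_, fun i => ?_⟩
  · rwa [← sum_subset (subset_univ A) fun i _ hi => by rw [hl₀A i hi, zero_smul]]
  · by_cases hi : i ∈ A
    · rw [(mem_filter.1 hi).2, neg_zero, min_eq_left (hl₀ i)]
    · rw [hl₀A i hi, min_eq_right (nonneg_of_tendsto_min (hcx i).neg (hmin i))]

/-- If a sequence satisfies the approximate KKT conditions of the GNEP and
converges to `xbar` where GNEP-CPLD holds, then `xbar` is a KKT point (for some multiplier). -/
theorem stmt4 {N : ℕ} {n r : Fin N → ℕ}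
    (θ : Fin N → Strat n → ℝ)
    (c : (ν : Fin N) → Fin (r ν) → Strat n → ℝ)
    (hθ : ∀ ν, ContDiff ℝ 1 (θ ν))
    (hc : ∀ ν i, ContDiff ℝ 1 (c ν i))
    (x : ℕ → Strat n) (xbar : Strat n)
    (hx : Tendsto x atTop (𝓝 xbar))
    (lam : ℕ → (ν : Fin N) → Fin (r ν) → ℝ)
    (h1 : ∀ ν, Tendsto (fun k => pgrad ν (θ ν) (x k) +
        ∑ i, lam k ν i • pgrad ν (c ν i) (x k)) atTop (𝓝 0))
    (h2 : ∀ ν i, Tendsto (fun k => min (-(c ν i (x k))) (lam k ν i)) atTop (𝓝 0))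
    (hCPLD : ∀ ν, CPLDnu ν (c ν) xbar) :
    ∃ lambar : (ν : Fin N) → Fin (r ν) → ℝ, KKTPoint θ c xbar lambar := by
  choose lambar hgrad hcompl using fun ν =>
    exists_kkt_multiplier_of_cpldNu ν (hθ ν) (hc ν) hx (h1 ν) (h2 ν) (hCPLD ν)
  exact ⟨lambar, fun ν => ⟨hgrad ν, hcompl ν⟩⟩
end

section
/- Consider a GNEP with continuously differentiable constraint functions c^ν, let ν be a fixed player index, and let x ∈ ℝ^n be a point with c^ν(x) ≤ 0 at which c^ν satisfies MFCQ_ν. Then there is a neighbourhood U of x such that for every y ∈ U the feasible set X_ν(y^{−ν}) = {z^ν ∈ ℝ^{n_ν} : c^ν(z^ν, y^{−ν}) ≤ 0} is nonempty. -/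
open Filter Topology Finset Function RealInnerProductSpace

/-! Move from `x` along `v = (d, 0)`: for small `t > 0` every constraint is strictly negative at
`x + t • v` (active ones because `d` is a descent direction for them, inactive ones by
continuity). Strict inequalities persist when the base point `x` is perturbed to `y`, and
`y + t • v` only changes player `ν`'s block of `y`. -/

lemma update_add_eq_add_single {ι : Type*} [DecidableEq ι] {β : ι → Type*}
    [∀ i, AddZeroClass (β i)] (y : ∀ i, β i) (i : ι) (a : β i) :
    update y i (y i + a) = y + Pi.single i a := by
  ext j
  rcases eq_or_ne j i with rfl | h
  · simp
  · simp [update_of_ne h, Pi.single_eq_of_ne h]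

lemma inner_pgrad_eq_fderiv {N : ℕ} {n : Fin N → ℕ} (ν : Fin N) {f : Strat n → ℝ}
    {x : Strat n} (hf : DifferentiableAt ℝ f x) (d : EuclideanSpace ℝ (Fin (n ν))) :
    ⟪pgrad ν f x, d⟫ = fderiv ℝ f x (Pi.single ν d) := by
  have hupdate : HasFDerivAt (fun z => f (update x ν z))
      ((fderiv ℝ f x).comp (.pi (Pi.single ν (.id ℝ _)))) (x ν) := by
    refine HasFDerivAt.comp (x ν) ?_ (hasFDerivAt_update x (x ν))
    rw [update_eq_self]; exact hf.hasFDerivAt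
  rw [pgrad, hupdate.hasGradientAt.gradient, InnerProductSpace.toDual_symm_apply,
    ContinuousLinearMap.comp_apply, ContinuousLinearMap.coe_pi']
  congr 1
  ext j
  rcases eq_or_ne j ν with rfl | h <;> simp [*]

lemma HasDerivAt.eventually_nhdsGT_neg {φ : ℝ → ℝ} {φ' a : ℝ} (h : HasDerivAt φ φ' a)
    (ha : φ a ≤ 0) (hφ' : φ a = 0 → φ' < 0) : ∀ᶠ t in 𝓝[>] a, φ t < 0 := by
  rcases ha.lt_or_eq with hlt | hzero
  · exact (h.continuousAt.eventually_lt_const hlt).filter_mono nhdsWithin_le_nhds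
  · filter_upwards [h.hasDerivWithinAt.limsup_slope_le' (lt_irrefl a) (hφ' hzero),
      self_mem_nhdsWithin] with t hslope (ht : a < t)
    rwa [slope_def_field, hzero, sub_zero, div_lt_iff₀ (sub_pos.2 ht), zero_mul] at hslope

lemma DifferentiableAt.eventually_nhdsGT_apply_add_smul_neg {E : Type*} [NormedAddCommGroup E]
    [NormedSpace ℝ E] {g : E → ℝ} {x v : E} (hg : DifferentiableAt ℝ g x) (hx : g x ≤ 0)
    (hv : g x = 0 → fderiv ℝ g x v < 0) : ∀ᶠ t in 𝓝[>] (0 : ℝ), g (x + t • v) < 0 := by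
  have hline : HasDerivAt (fun t : ℝ => x + t • v) v 0 := by
    simpa using ((hasDerivAt_id (0 : ℝ)).smul_const v).const_add x
  have hcomp : HasDerivAt (fun t : ℝ => g (x + t • v)) (fderiv ℝ g x v) 0 :=
    hg.hasFDerivAt.comp_hasDerivAt_of_eq 0 hline (by simp)
  exact hcomp.eventually_nhdsGT_neg (by simpa using hx) (by simpa using hv)

/-- Under MFCQ with respect to player `ν` at a point feasible for player `ν`,
the feasible set `X_ν (y^{-ν})` is nonempty for all `y` in a neighbourhood of `x`. -/
theorem stmt6 {N : ℕ} {n : Fin N → ℕ} {r : ℕ}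
    (ν : Fin N) (c : Fin r → Strat n → ℝ)
    (hc : ∀ i, ContDiff ℝ 1 (c i))
    (x : Strat n)
    (hfeas : ∀ i, c i x ≤ 0)
    (hMFCQ : ∃ d : EuclideanSpace ℝ (Fin (n ν)), ∀ i, c i x = 0 →
      inner (𝕜 := ℝ) (pgrad ν (c i) x) d < 0) :
    ∃ U ∈ 𝓝 x, ∀ y ∈ U, ∃ z : EuclideanSpace ℝ (Fin (n ν)),
      ∀ i, c i (Function.update y ν z) ≤ 0 := by
  obtain ⟨d, hd⟩ := hMFCQ
  have hdescent : ∀ᶠ t in 𝓝[>] (0 : ℝ), ∀ i, c i (x + t • (Pi.single ν d : Strat n)) < 0 :=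
    eventually_all.2 fun i =>
      have hdiff := (hc i).differentiable one_ne_zero x
      hdiff.eventually_nhdsGT_apply_add_smul_neg (hfeas i) fun hi =>
        inner_pgrad_eq_fderiv ν hdiff d ▸ hd i hi
  obtain ⟨t, ht⟩ := hdescent.exists
  have hstable : ∀ᶠ y in 𝓝 x, ∀ i, c i (y + t • (Pi.single ν d : Strat n)) < 0 :=
    eventually_all.2 fun i =>
      ((hc i).continuous.comp (continuous_add_const _)).continuousAt.eventually_lt_const (ht i)
  refine ⟨_, hstable, fun y hy => ⟨y ν + t • d, fun i => ?_⟩⟩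
  rw [update_add_eq_add_single, Pi.single_smul]
  exact (hy i).le
end

section
/- Let x̄ be a KKT point of the Feasibility GNEP associated with a partially penalized GNEP with continuously differentiable g^ν and h^ν, and assume that GNEP-EMFCQ holds at x̄ for the combined constraints c^ν = (g^ν, h^ν). Then g^ν(x̄) ≤ 0 for every ν, i.e. x̄ is feasible for the original GNEP; in particular, x̄ is a global solution of the Feasibility GNEP. -/
open Filter Topology Finset Function RealInnerProductSpace

/-!
Pair the stationarity equation of player `ν` with the EMFCQ direction `d`. Every term
`2 max(gᵢ(x̄), 0) ⟪∇gᵢ, d⟫` and `wⱼ ⟪∇hⱼ, d⟫` is nonpositive, since a positive coefficient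
forces the constraint to be violated or active, where EMFCQ makes the inner product negative.
As the terms sum to zero they all vanish, so no `gᵢ(x̄)` is positive. The penalty then vanishes
at `x̄`, which makes `x̄` a global minimizer of every player's nonnegative penalty.
-/

theorem hasDerivAt_max_zero_sq (t : ℝ) :
    HasDerivAt (fun s : ℝ => max s 0 ^ 2) (2 * max t 0) t := by
  rcases lt_trichotomy t 0 with ht | rfl | ht
  · have hloc : (fun s : ℝ => max s 0 ^ 2) =ᶠ[𝓝 t] fun _ => 0 := by
      filter_upwards [Iio_mem_nhds ht] with s (hs : s < 0)
      simp [hs.le]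
    simpa [max_eq_right ht.le] using (hasDerivAt_const t (0 : ℝ)).congr_of_eventuallyEq hloc
  · rw [hasDerivAt_iff_isLittleO]
    simp only [max_self, mul_zero, sub_zero, smul_zero, ne_eq, OfNat.ofNat_ne_zero,
      not_false_eq_true, zero_pow]
    refine Asymptotics.IsBigO.trans_isLittleO ?_ (Asymptotics.isLittleO_pow_id one_lt_two)
    refine Asymptotics.IsBigO.of_bound 1 (Eventually.of_forall fun s => ?_)
    rcases le_total s 0 with hs | hs <;> simp [hs, sq_nonneg]
  · have hloc : (fun s : ℝ => max s 0 ^ 2) =ᶠ[𝓝 t] fun s => s ^ 2 := by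
      filter_upwards [Ioi_mem_nhds ht] with s (hs : 0 < s)
      simp [hs.le]
    simpa [max_eq_left ht.le] using (hasDerivAt_pow 2 t).congr_of_eventuallyEq hloc

section Gradient

variable {E : Type*} [NormedAddCommGroup E] [InnerProductSpace ℝ E] [CompleteSpace E]

theorem HasDerivAt.comp_hasGradientAt {f : E → ℝ} {φ : ℝ → ℝ} {x G : E} {φ' : ℝ}
    (hφ : HasDerivAt φ φ' (f x)) (hf : HasGradientAt f G x) :
    HasGradientAt (φ ∘ f) (φ' • G) x := by
  rw [hasGradientAt_iff_hasFDerivAt] at hf ⊢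
  exact (hφ.comp_hasFDerivAt x hf).congr_fderiv (by simp [map_smul])

theorem HasGradientAt.sum {ι : Type*} {s : Finset ι} {f : ι → E → ℝ} {G : ι → E} {x : E}
    (hf : ∀ i ∈ s, HasGradientAt (f i) (G i) x) :
    HasGradientAt (fun z => ∑ i ∈ s, f i z) (∑ i ∈ s, G i) x := by
  rw [hasGradientAt_iff_hasFDerivAt]
  exact (HasFDerivAt.fun_sum fun i hi => hasGradientAt_iff_hasFDerivAt.mp (hf i hi)).congr_fderiv
    (by simp [map_sum])

end Gradient

section PartialGradient

variable {N : ℕ} {n : Fin N → ℕ}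

theorem hasGradientAt_pgrad (ν : Fin N) {f : Strat n → ℝ} {x : Strat n}
    (hf : DifferentiableAt ℝ f x) :
    HasGradientAt (fun z => f (update x ν z)) (pgrad ν f x) (x ν) := by
  rw [← update_eq_self ν x] at hf
  exact (hf.comp (x ν) (hasFDerivAt_update x (x ν)).differentiableAt).hasGradientAt

theorem pgrad_sum_max_zero_sq {ι : Type*} [Fintype ι] (ν : Fin N) {g : ι → Strat n → ℝ}
    {x : Strat n} (hg : ∀ i, DifferentiableAt ℝ (g i) x) :
    pgrad ν (fun y => ∑ i, max (g i y) 0 ^ 2) x = ∑ i, (2 * max (g i x) 0) • pgrad ν (g i) x := by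
  refine (HasGradientAt.sum fun i _ => ?_).gradient
  have hφ : HasDerivAt (fun s : ℝ => max s 0 ^ 2) (2 * max (g i x) 0)
      (g i (update x ν (x ν))) := by
    simpa only [update_eq_self] using hasDerivAt_max_zero_sq (g i x)
  exact hφ.comp_hasGradientAt (f := fun z => g i (update x ν z)) (hasGradientAt_pgrad ν (hg i))

end PartialGradient

theorem eq_zero_of_sum_smul_eq_zero_of_inner_neg {E ι : Type*} [NormedAddCommGroup E]
    [InnerProductSpace ℝ E] [Fintype ι] {a : ι → ℝ} {v : ι → E} {d : E}
    (ha : ∀ i, 0 ≤ a i) (hd : ∀ i, 0 < a i → ⟪v i, d⟫ < 0) (hsum : ∑ i, a i • v i = 0)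
    (i : ι) : a i = 0 := by
  have hterm : ∀ i ∈ univ, a i * ⟪v i, d⟫ ≤ 0 := fun i _ => by
    rcases (ha i).eq_or_lt with hi | hi
    · simp [← hi]
    · exact mul_nonpos_of_nonneg_of_nonpos hi.le (hd i hi).le
  have htotal : ∑ i, a i * ⟪v i, d⟫ = 0 := by
    simpa [sum_inner, real_inner_smul_left] using congrArg (⟪·, d⟫) hsum
  have hi := (sum_eq_zero_iff_of_nonpos hterm).1 htotal i (mem_univ i)
  by_contra hne
  have hpos := lt_of_le_of_ne (ha i) (Ne.symm hne)
  exact (mul_neg_of_pos_of_neg hpos (hd i hpos)).ne hi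

theorem nonpos_nonneg_of_min_neg_eq_zero {c w : ℝ} (h : min (-c) w = 0) :
    c ≤ 0 ∧ 0 ≤ w ∧ (0 < w → c = 0) := by
  rcases min_eq_iff.1 h with ⟨h₁, h₂⟩ | ⟨h₁, h₂⟩ <;> refine ⟨?_, ?_, fun _ => ?_⟩ <;> linarith

theorem stmt11_general {N : ℕ} {n m p : Fin N → ℕ}
    (g : (ν : Fin N) → Fin (m ν) → Strat n → ℝ)
    (h : (ν : Fin N) → Fin (p ν) → Strat n → ℝ)
    (hg : ∀ ν i, ContDiff ℝ 1 (g ν i))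
    (xbar : Strat n)
    (hKKT : ∀ ν, ∃ w : Fin (p ν) → ℝ,
      (pgrad ν (fun y => ∑ i, max (g ν i y) 0 ^ 2) xbar
        + ∑ j, w j • pgrad ν (h ν j) xbar = 0) ∧
      (∀ j, min (-(h ν j xbar)) (w j) = 0))
    (hEMFCQ : ∀ ν, EMFCQnu ν (Sum.elim (g ν) (h ν)) xbar) :
    (∀ ν i, g ν i xbar ≤ 0) ∧
    ((∀ ν j, h ν j xbar ≤ 0) ∧
      ∀ (ν : Fin N) (z : EuclideanSpace ℝ (Fin (n ν))),
        (∀ j, h ν j (Function.update xbar ν z) ≤ 0) →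
        ∑ i, max (g ν i xbar) 0 ^ 2 ≤ ∑ i, max (g ν i (Function.update xbar ν z)) 0 ^ 2) := by
  have hfeas_h : ∀ ν j, h ν j xbar ≤ 0 := fun ν j => by
    obtain ⟨w, -, hcompl⟩ := hKKT ν
    exact (nonpos_nonneg_of_min_neg_eq_zero (hcompl j)).1
  have hfeas_g : ∀ ν i, g ν i xbar ≤ 0 := by
    intro ν i
    obtain ⟨w, hstat, hcompl⟩ := hKKT ν
    obtain ⟨d, hd⟩ := hEMFCQ ν
    rw [pgrad_sum_max_zero_sq ν fun i => ((hg ν i).differentiable one_ne_zero).differentiableAt]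
      at hstat
    have hcoef := eq_zero_of_sum_smul_eq_zero_of_inner_neg
      (a := Sum.elim (fun i => 2 * max (g ν i xbar) 0) w)
      (v := Sum.elim (fun i => pgrad ν (g ν i) xbar) fun j => pgrad ν (h ν j) xbar) (d := d)
      (by rintro (i | j) <;> simp [(nonpos_nonneg_of_min_neg_eq_zero (hcompl _)).2.1])
      (by
        rintro (i | j) hpos
        · simp only [Sum.elim_inl, Nat.ofNat_pos, mul_pos_iff_of_pos_left, right_lt_sup,
            not_le] at hpos
          exact hd (Sum.inl i) hpos.le
        · exact hd (Sum.inr j) ((nonpos_nonneg_of_min_neg_eq_zero (hcompl j)).2.2 hpos).ge)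
      (by simpa [Fintype.sum_sum_type] using hstat) (Sum.inl i)
    simpa using hcoef
  refine ⟨hfeas_g, hfeas_h, fun ν z _ => ?_⟩
  calc ∑ i, max (g ν i xbar) 0 ^ 2 = 0 := sum_eq_zero fun i _ => by simp [hfeas_g ν i]
    _ ≤ _ := by positivity

/-- **Theorem 4.3.** A KKT point of the Feasibility GNEP at which GNEP-EMFCQ
holds for the combined constraints is feasible for the original GNEP; in particular it is a
global solution of the Feasibility GNEP. -/
theorem stmt11 {N : ℕ} {n m p : Fin N → ℕ}
    (g : (ν : Fin N) → Fin (m ν) → Strat n → ℝ)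
    (h : (ν : Fin N) → Fin (p ν) → Strat n → ℝ)
    (hg : ∀ ν i, ContDiff ℝ 1 (g ν i))
    (hh : ∀ ν j, ContDiff ℝ 1 (h ν j))
    (xbar : Strat n)
    (hKKT : ∀ ν, ∃ w : Fin (p ν) → ℝ,
      (pgrad ν (fun y => ∑ i, max (g ν i y) 0 ^ 2) xbar
        + ∑ j, w j • pgrad ν (h ν j) xbar = 0) ∧
      (∀ j, min (-(h ν j xbar)) (w j) = 0))
    (hEMFCQ : ∀ ν, EMFCQnu ν (Sum.elim (g ν) (h ν)) xbar) :
    (∀ ν i, g ν i xbar ≤ 0) ∧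
    ((∀ ν j, h ν j xbar ≤ 0) ∧
      ∀ (ν : Fin N) (z : EuclideanSpace ℝ (Fin (n ν))),
        (∀ j, h ν j (Function.update xbar ν z) ≤ 0) →
        ∑ i, max (g ν i xbar) 0 ^ 2 ≤ ∑ i, max (g ν i (Function.update xbar ν z)) 0 ^ 2) :=
  stmt11_general g h hg xbar hKKT hEMFCQ
end

section
/- Let (x^k) be generated by the augmented Lagrangian method (Algorithm 3.1) applied to the partially penalized GNEP, under Assumption 3.2 with ε_k → 0 and ε'_k → 0, and let x̄ be a limit point of (x^k) along a subsequence K ⊆ ℕ. If x̄ is feasible (g^ν(x̄) ≤ 0 and h^ν(x̄) ≤ 0 for all ν), then for every player ν: ∇_{x^ν}θ_ν(x^k) + ∇_{x^ν}g^ν(x^k) λ^{ν,k} + ∇_{x^ν}h^ν(x^k) μ^{ν,k} → 0, min{−g^ν(x^k), λ^{ν,k}} → 0, and min{−h^ν(x^k), μ^{ν,k}} → 0, all along k ∈ K. -/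
open Filter Topology Finset Function RealInnerProductSpace

/-!
Stationarity and the complementarity of the unpenalized constraints `h` hold along the whole
sequence: they are Assumption 3.2 with `λ^{k+1}` substituted. For a penalized constraint `g_i`,
either it is active at `x̄`, and then `min{-g_i, λ_i} → 0` because `g_i(x^k) → 0` and `λ_i ≥ 0`;
or it is strictly inactive, and then either the penalty parameter stays bounded, so the whole
residual `‖min{-g, λ}‖` decays geometrically, or `ρ_k → ∞`, so that
`u_i + ρ_k g_i(x^{k+1}) < 0` and `λ_i^{k+1} = 0` eventually along the subsequence.
-/

lemma abs_le_sqrt_sum_sq {ι : Type*} [Fintype ι] (f : ι → ℝ) (i : ι) :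
    |f i| ≤ √(∑ j, f j ^ 2) :=
  Real.abs_le_sqrt (single_le_sum (fun j _ => sq_nonneg (f j)) (mem_univ i))

lemma tendsto_zero_of_eventually_le_mul {V : ℕ → ℝ} {τ : ℝ} (hV : ∀ k, 0 ≤ V k) (hτ0 : 0 ≤ τ)
    (hτ1 : τ < 1) {K : ℕ} (hdec : ∀ k ≥ K, V (k + 1) ≤ τ * V k) :
    Tendsto V atTop (𝓝 0) := by
  have hgeom : ∀ j, V (j + K) ≤ τ ^ j * V K := fun j => by
    simpa only [zero_add] using le_geom (u := fun j => V (j + K)) hτ0 j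
      fun k _ => by simpa only [Nat.add_right_comm] using hdec (k + K) (Nat.le_add_left K k)
  have hlim : Tendsto (fun j => τ ^ j * V K) atTop (𝓝 0) := by
    simpa using (tendsto_pow_atTop_nhds_zero_of_lt_one hτ0 hτ1).mul_const (V K)
  exact (tendsto_add_atTop_iff_nat K).1 (squeeze_zero (fun j => hV _) hgeom hlim)

lemma tendsto_atTop_of_frequently_mul_le {ρ : ℕ → ℝ} {γ : ℝ} (hmono : Monotone ρ)
    (h0 : 0 < ρ 0) (hγ : 1 < γ) (hfreq : ∀ K, ∃ k ≥ K, γ * ρ k ≤ ρ (k + 1)) :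
    Tendsto ρ atTop atTop := by
  have hpow : ∀ j : ℕ, ∃ k, γ ^ j * ρ 0 ≤ ρ k := by
    intro j
    induction j with
    | zero => exact ⟨0, by simp⟩
    | succ j ih =>
      obtain ⟨k, hk⟩ := ih
      obtain ⟨k', hkk', hk'⟩ := hfreq k
      refine ⟨k' + 1, ?_⟩
      calc γ ^ (j + 1) * ρ 0 = γ * (γ ^ j * ρ 0) := by ring
        _ ≤ γ * ρ k' := by gcongr; exact hk.trans (hmono hkk')
        _ ≤ ρ (k' + 1) := hk'
  refine tendsto_atTop_atTop_of_monotone hmono fun b => ?_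
  obtain ⟨j, hj⟩ := ((tendsto_pow_atTop_atTop_of_one_lt hγ).atTop_mul_const h0
    |>.eventually_ge_atTop b).exists
  obtain ⟨k, hk⟩ := hpow j
  exact ⟨k, hj.trans hk⟩

section PenaltyUpdate

variable {V ρ : ℕ → ℝ} {τ γ : ℝ}
  (hupd : ∀ k, (V (k + 1) ≤ τ * V k → ρ (k + 1) = ρ k) ∧
    (¬ V (k + 1) ≤ τ * V k → ρ (k + 1) = γ * ρ k))
include hupd

lemma penalty_succ_eq (k : ℕ) : ρ (k + 1) = ρ k ∨ ρ (k + 1) = γ * ρ k := by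
  by_cases hk : V (k + 1) ≤ τ * V k
  · exact .inl ((hupd k).1 hk)
  · exact .inr ((hupd k).2 hk)

lemma penalty_pos (hγ : 0 < γ) (h0 : 0 < ρ 0) (k : ℕ) : 0 < ρ k := by
  induction k with
  | zero => exact h0
  | succ k ih =>
    rcases penalty_succ_eq hupd k with hk | hk <;> rw [hk]
    exacts [ih, mul_pos hγ ih]

lemma penalty_monotone (hγ : 1 < γ) (h0 : 0 < ρ 0) : Monotone ρ := by
  refine monotone_nat_of_le_succ fun k => ?_
  rcases penalty_succ_eq hupd k with hk | hk <;> rw [hk]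
  exact le_mul_of_one_le_left (penalty_pos hupd (by linarith) h0 k).le hγ.le

lemma tendsto_residual_or_penalty (hV : ∀ k, 0 ≤ V k) (hτ0 : 0 ≤ τ) (hτ1 : τ < 1)
    (hγ : 1 < γ) (h0 : 0 < ρ 0) :
    Tendsto V atTop (𝓝 0) ∨ Tendsto ρ atTop atTop := by
  by_cases hdec : ∃ K, ∀ k ≥ K, V (k + 1) ≤ τ * V k
  · obtain ⟨K, hK⟩ := hdec
    exact .inl (tendsto_zero_of_eventually_le_mul hV hτ0 hτ1 hK)
  · push Not at hdec
    refine .inr (tendsto_atTop_of_frequently_mul_le (penalty_monotone hupd hγ h0) h0 hγ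
      fun K => ?_)
    obtain ⟨k, hkK, hk⟩ := hdec K
    exact ⟨k, hkK, ((hupd k).2 (not_le.2 hk)).ge⟩

end PenaltyUpdate

lemma eventually_add_mul_nonpos {α : Type*} {l : Filter α} {a b r : α → ℝ} {c B : ℝ}
    (ha : Tendsto a l (𝓝 c)) (hc : c < 0) (hr : Tendsto r l atTop) (hb : ∀ᶠ k in l, b k ≤ B) :
    ∀ᶠ k in l, b k + r k * a k ≤ 0 := by
  have hbot := tendsto_atBot_add_const_left l B (hr.atTop_mul_neg hc ha)
  filter_upwards [hb, hbot.eventually_le_atBot 0] with k hbk hk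
  linarith

/-- `G k`, `Λ k`, `U k` stand for `g_i(x^k)`, `λ_i^k`, `u_i^k`, and `V k` for the residual
`‖min{-g(x^k), λ^k}‖` that drives the penalty update. -/
lemma tendsto_min_neg_multiplier {l : Filter ℕ} (hl : l ≤ atTop) {G Λ U ρ V : ℕ → ℝ}
    {c umax : ℝ} (hΛ : ∀ k, Λ (k + 1) = max (U k + ρ k * G (k + 1)) 0) (hU : ∀ k, U k ≤ umax)
    (hV : ∀ k, |min (-G k) (Λ k)| ≤ V k) (hc : c ≤ 0)
    (hG : Tendsto (fun k => G (k + 1)) l (𝓝 c))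
    (hVρ : Tendsto V atTop (𝓝 0) ∨ Tendsto ρ atTop atTop) :
    Tendsto (fun k => min (-G (k + 1)) (Λ (k + 1))) l (𝓝 0) := by
  rcases hc.lt_or_eq with hc | rfl
  · rcases hVρ with hV0 | hρ
    · refine squeeze_zero_norm (fun k => hV (k + 1)) ?_
      exact ((tendsto_add_atTop_iff_nat 1).2 hV0).mono_left hl
    · have hΛ0 : ∀ᶠ k in l, U k + ρ k * G (k + 1) ≤ 0 :=
        eventually_add_mul_nonpos hG hc (hρ.mono_left hl) (.of_forall hU)
      refine tendsto_const_nhds.congr' ?_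
      filter_upwards [hΛ0, hG.eventually_lt_const hc] with k hk hGk
      rw [hΛ, max_eq_right hk, min_eq_right (by linarith)]
  · have hΛ_nonneg : ∀ k, 0 ≤ Λ (k + 1) := fun k => (hΛ k).symm ▸ le_max_right _ _
    have hlower : Tendsto (fun k => min (-G (k + 1)) 0) l (𝓝 0) := by
      simpa using hG.neg.min (tendsto_const_nhds (x := (0 : ℝ)))
    refine tendsto_of_tendsto_of_tendsto_of_le_of_le hlower (by simpa using hG.neg)
      (fun k => min_le_min_left _ (hΛ_nonneg k)) (fun k => min_le_left _ _)

lemma tendsto_succ_map_pred_iff {α : Type*} {φ : ℕ → ℕ} (hφ : StrictMono φ) {F : ℕ → α}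
    {L : Filter α} :
    Tendsto (fun j => F (j + 1)) (map (fun k => φ k - 1) atTop) L ↔
      Tendsto (fun k => F (φ k)) atTop L := by
  rw [tendsto_map'_iff]
  refine tendsto_congr' ?_
  filter_upwards [eventually_ge_atTop 1] with k hk
  simp only [comp_apply, Nat.sub_add_cancel (hk.trans hφ.le_apply)]
theorem stmt13_general {N : ℕ} {n m p : Fin N → ℕ}
    (θ : Fin N → Strat n → ℝ)
    (g : (ν : Fin N) → Fin (m ν) → Strat n → ℝ)
    (h : (ν : Fin N) → Fin (p ν) → Strat n → ℝ)
    (hg : ∀ ν i, ContDiff ℝ 1 (g ν i))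
    (x : ℕ → Strat n)
    (lam : (k : ℕ) → (ν : Fin N) → Fin (m ν) → ℝ)
    (mu : (k : ℕ) → (ν : Fin N) → Fin (p ν) → ℝ)
    (u : (k : ℕ) → (ν : Fin N) → Fin (m ν) → ℝ)
    (rho : ℕ → Fin N → ℝ)
    (umax : ℝ) (τ γ : Fin N → ℝ)
    (hτ : ∀ ν, τ ν ∈ Set.Ioo (0:ℝ) 1)
    (hγ : ∀ ν, 1 < γ ν)
    (hrho0 : ∀ ν, 0 < rho 0 ν)
    (hu0 : ∀ ν i, u 0 ν i ∈ Set.Icc 0 umax)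
    (hlam : ∀ k ν i, lam (k+1) ν i = max (u k ν i + rho k ν * g ν i (x (k+1))) 0)
    (hu : ∀ k ν i, u (k+1) ν i = min (lam (k+1) ν i) umax)
    (hrho : ∀ k ν,
      (Real.sqrt (∑ i, (min (-(g ν i (x (k+1)))) (lam (k+1) ν i)) ^ 2) ≤
          τ ν * Real.sqrt (∑ i, (min (-(g ν i (x k))) (lam k ν i)) ^ 2) →
        rho (k+1) ν = rho k ν) ∧
      (¬ (Real.sqrt (∑ i, (min (-(g ν i (x (k+1)))) (lam (k+1) ν i)) ^ 2) ≤
          τ ν * Real.sqrt (∑ i, (min (-(g ν i (x k))) (lam k ν i)) ^ 2)) →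
        rho (k+1) ν = γ ν * rho k ν))
    (eps eps' : ℕ → ℝ)
    (heps' : Tendsto eps' atTop (𝓝 0))
    (hA1 : ∀ k ν, ‖pgrad ν (θ ν) (x (k+1))
        + ∑ i, max (u k ν i + rho k ν * g ν i (x (k+1))) 0 • pgrad ν (g ν i) (x (k+1))
        + ∑ j, mu (k+1) ν j • pgrad ν (h ν j) (x (k+1))‖ ≤ eps k)
    (hA2 : ∀ k ν, Real.sqrt (∑ j, (min (-(h ν j (x (k+1)))) (mu (k+1) ν j)) ^ 2) ≤ eps' k)
    (heps : Tendsto eps atTop (𝓝 0))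
    (φ : ℕ → ℕ) (hφ : StrictMono φ) (xbar : Strat n)
    (hxconv : Tendsto (fun k => x (φ k)) atTop (𝓝 xbar))
    (hfeasg : ∀ ν i, g ν i xbar ≤ 0) :
    ∀ ν,
      Tendsto (fun k => pgrad ν (θ ν) (x (φ k))
          + ∑ i, lam (φ k) ν i • pgrad ν (g ν i) (x (φ k))
          + ∑ j, mu (φ k) ν j • pgrad ν (h ν j) (x (φ k))) atTop (𝓝 0) ∧
      (∀ i, Tendsto (fun k => min (-(g ν i (x (φ k)))) (lam (φ k) ν i)) atTop (𝓝 0)) ∧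
      (∀ j, Tendsto (fun k => min (-(h ν j (x (φ k)))) (mu (φ k) ν j)) atTop (𝓝 0)) := by
  intro ν
  have hVρ := tendsto_residual_or_penalty
    (V := fun k => √(∑ i, (min (-(g ν i (x k))) (lam k ν i)) ^ 2)) (ρ := (rho · ν)) (hrho · ν)
    (fun _ => Real.sqrt_nonneg _) (hτ ν).1.le (hτ ν).2 (hγ ν) (hrho0 ν)
  refine ⟨?_, fun i => ?_, fun j => ?_⟩
  · have hstat : Tendsto (fun k => pgrad ν (θ ν) (x k) + ∑ i, lam k ν i • pgrad ν (g ν i) (x k)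
        + ∑ j, mu k ν j • pgrad ν (h ν j) (x k)) atTop (𝓝 0) :=
      (tendsto_add_atTop_iff_nat 1).1 <|
        squeeze_zero_norm (fun k => by simpa only [hlam] using hA1 k ν) heps
    exact hstat.comp hφ.tendsto_atTop
  · have hU : ∀ k, u k ν i ≤ umax
      | 0 => (hu0 ν i).2
      | k + 1 => (hu k ν i).symm ▸ min_le_right _ _
    -- `λ^{φ j}` is computed at iteration `φ j - 1`, from `u^{φ j - 1}` and `ρ_{φ j - 1}`.
    let l := map (fun k => φ k - 1) atTop
    have hl : l ≤ atTop := (tendsto_sub_atTop_nat 1).comp hφ.tendsto_atTop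
    have hG : Tendsto (fun k => g ν i (x (k + 1))) l (𝓝 (g ν i xbar)) :=
      (tendsto_succ_map_pred_iff hφ (F := fun k => g ν i (x k))).2 <|
        ((hg ν i).continuous.tendsto xbar).comp hxconv
    have hV : ∀ k, |min (-(g ν i (x k))) (lam k ν i)| ≤
        √(∑ i, (min (-(g ν i (x k))) (lam k ν i)) ^ 2) :=
      fun k => abs_le_sqrt_sum_sq (fun i => min (-(g ν i (x k))) (lam k ν i)) i
    exact (tendsto_succ_map_pred_iff hφ (F := fun k => min (-(g ν i (x k))) (lam k ν i))).1 <|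
      tendsto_min_neg_multiplier hl (hlam · ν i) hU hV (hfeasg ν i) hG hVρ
  · have hcompl : Tendsto (fun k => min (-(h ν j (x k))) (mu k ν j)) atTop (𝓝 0) :=
      (tendsto_add_atTop_iff_nat 1).1 <| squeeze_zero_norm (fun k => (Real.norm_eq_abs _).trans_le
        ((abs_le_sqrt_sum_sq (fun j => min (-(h ν j (x (k + 1)))) (mu (k + 1) ν j)) j).trans
          (hA2 k ν))) heps'
    exact hcompl.comp hφ.tendsto_atTop

/-- **Lemma 4.5.** If a subsequence of the augmented Lagrangian iterates
converges to a feasible point, then the approximate KKT conditions of the original GNEP hold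
along this subsequence. -/
theorem stmt13 {N : ℕ} {n m p : Fin N → ℕ}
    (θ : Fin N → Strat n → ℝ)
    (g : (ν : Fin N) → Fin (m ν) → Strat n → ℝ)
    (h : (ν : Fin N) → Fin (p ν) → Strat n → ℝ)
    (hθ : ∀ ν, ContDiff ℝ 1 (θ ν))
    (hg : ∀ ν i, ContDiff ℝ 1 (g ν i))
    (hh : ∀ ν j, ContDiff ℝ 1 (h ν j))
    (x : ℕ → Strat n)
    (lam : (k : ℕ) → (ν : Fin N) → Fin (m ν) → ℝ)
    (mu : (k : ℕ) → (ν : Fin N) → Fin (p ν) → ℝ)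
    (u : (k : ℕ) → (ν : Fin N) → Fin (m ν) → ℝ)
    (rho : ℕ → Fin N → ℝ)
    (umax : ℝ) (τ γ : Fin N → ℝ)
    (humax : 0 ≤ umax)
    (hτ : ∀ ν, τ ν ∈ Set.Ioo (0:ℝ) 1)
    (hγ : ∀ ν, 1 < γ ν)
    (hrho0 : ∀ ν, 0 < rho 0 ν)
    (hu0 : ∀ ν i, u 0 ν i ∈ Set.Icc 0 umax)
    (hlam : ∀ k ν i, lam (k+1) ν i = max (u k ν i + rho k ν * g ν i (x (k+1))) 0)
    (hu : ∀ k ν i, u (k+1) ν i = min (lam (k+1) ν i) umax)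
    (hrho : ∀ k ν,
      (Real.sqrt (∑ i, (min (-(g ν i (x (k+1)))) (lam (k+1) ν i)) ^ 2) ≤
          τ ν * Real.sqrt (∑ i, (min (-(g ν i (x k))) (lam k ν i)) ^ 2) →
        rho (k+1) ν = rho k ν) ∧
      (¬ (Real.sqrt (∑ i, (min (-(g ν i (x (k+1)))) (lam (k+1) ν i)) ^ 2) ≤
          τ ν * Real.sqrt (∑ i, (min (-(g ν i (x k))) (lam k ν i)) ^ 2)) →
        rho (k+1) ν = γ ν * rho k ν))
    (eps eps' : ℕ → ℝ)
    (heps0 : ∀ k, 0 ≤ eps k)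
    (heps'0 : ∀ k, 0 ≤ eps' k)
    (heps' : Tendsto eps' atTop (𝓝 0))
    (hA1 : ∀ k ν, ‖pgrad ν (θ ν) (x (k+1))
        + ∑ i, max (u k ν i + rho k ν * g ν i (x (k+1))) 0 • pgrad ν (g ν i) (x (k+1))
        + ∑ j, mu (k+1) ν j • pgrad ν (h ν j) (x (k+1))‖ ≤ eps k)
    (hA2 : ∀ k ν, Real.sqrt (∑ j, (min (-(h ν j (x (k+1)))) (mu (k+1) ν j)) ^ 2) ≤ eps' k)
    (heps : Tendsto eps atTop (𝓝 0))
    (φ : ℕ → ℕ) (hφ : StrictMono φ) (xbar : Strat n)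
    (hxconv : Tendsto (fun k => x (φ k)) atTop (𝓝 xbar))
    (hfeasg : ∀ ν i, g ν i xbar ≤ 0)
    (hfeash : ∀ ν j, h ν j xbar ≤ 0) :
    ∀ ν,
      Tendsto (fun k => pgrad ν (θ ν) (x (φ k))
          + ∑ i, lam (φ k) ν i • pgrad ν (g ν i) (x (φ k))
          + ∑ j, mu (φ k) ν j • pgrad ν (h ν j) (x (φ k))) atTop (𝓝 0) ∧
      (∀ i, Tendsto (fun k => min (-(g ν i (x (φ k)))) (lam (φ k) ν i)) atTop (𝓝 0)) ∧
      (∀ j, Tendsto (fun k => min (-(h ν j (x (φ k)))) (mu (φ k) ν j)) atTop (𝓝 0)) :=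
  stmt13_general θ g h hg x lam mu u rho umax τ γ hτ hγ hrho0 hu0 hlam hu hrho eps eps' heps' hA1
    hA2 heps φ hφ xbar hxconv hfeasg
end
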